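/- Four pairwise distinct points in ℝⁿ lie on a common circle or line if and only if their light cone lifts Y, Y₁, Y₁₂, Y₂ span a linear subspace of ℝ^{n+1,1} of dimension at most 3. -/

import Mathlib

open EuclideanGeometry

/-- The light cone lift X(x) = (2x, 1 - |x|², 1 + |x|²). -/
noncomputable def lift {n : ℕ} (x : EuclideanSpace ℝ (Fin n)) : Fin (n + 2) → ℝ :=
  fun i => if h : (i : ℕ) < n then 2 * x ⟨i, h⟩
    else if (i : ℕ) = n then 1 - ‖x‖ ^ 2 else 1 + ‖x‖ ^ 2

open Module Submodule RealInnerProductSpace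

section Aux
variable {V : Type*} [AddCommGroup V] [Module ℝ V]

lemma mem_span_triple {u v t : V} {α β γ : ℝ} :
    α • u + β • v + γ • t ∈ span ℝ ({u, v, t} : Set V) :=
  add_mem (add_mem (smul_mem _ _ (subset_span (by simp)))
    (smul_mem _ _ (subset_span (by simp)))) (smul_mem _ _ (subset_span (by simp)))

lemma aux3 (y₁ y₂ y₃ z : V) (hz : z ∈ span ℝ ({y₁, y₂, y₃} : Set V)) :
    finrank ℝ (span ℝ ({y₁, y₂, y₃, z} : Set V)) ≤ 3 := by
  classical
  have hsub : ({y₁, y₂, y₃, z} : Set V) ⊆ span ℝ ({y₁, y₂, y₃} : Set V) := by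
    intro x hx
    rcases hx with rfl | rfl | rfl | rfl
    · exact subset_span (by simp)
    · exact subset_span (by simp)
    · exact subset_span (by simp)
    · exact hz
  have hle : span ℝ ({y₁, y₂, y₃, z} : Set V) ≤ span ℝ ({y₁, y₂, y₃} : Set V) :=
    span_le.2 hsub
  have h3 : finrank ℝ (span ℝ (({y₁, y₂, y₃} : Finset V) : Set V)) ≤ 3 := by
    refine (finrank_span_finset_le_card _).trans ?_
    refine (Finset.card_insert_le _ _).trans ?_
    exact Nat.succ_le_succ ((Finset.card_insert_le _ _).trans (by simp))
  have hco : (({y₁, y₂, y₃} : Finset V) : Set V) = ({y₁, y₂, y₃} : Set V) := by simp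
  rw [hco] at h3
  have hfin : FiniteDimensional ℝ (span ℝ ({y₁, y₂, y₃} : Set V)) :=
    FiniteDimensional.span_of_finite ℝ (by simp)
  exact (Submodule.finrank_mono hle).trans h3

lemma span4 (u v t z : V) (α β γ δ : ℝ) (hδ : δ ≠ 0) (h : α•u+β•v+γ•t+δ•z = 0) :
    finrank ℝ (span ℝ ({u, v, t, z} : Set V)) ≤ 3 := by
  refine aux3 u v t z ?_
  have h1 : δ • z ∈ span ℝ ({u, v, t} : Set V) := by
    have h2 : δ • z = (-α)•u + (-β)•v + (-γ)•t := by
      linear_combination (norm := module) h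
    rw [h2]; exact mem_span_triple
  have h3 : z = δ⁻¹ • (δ • z) := by rw [smul_smul, inv_mul_cancel₀ hδ, one_smul]
  rw [h3]; exact smul_mem _ _ h1

lemma span_four_le_three (x₀ x₁ x₂ x₃ : V) (w₀ w₁ w₂ w₃ : ℝ)
    (hw : ¬(w₀ = 0 ∧ w₁ = 0 ∧ w₂ = 0 ∧ w₃ = 0))
    (h : w₀ • x₀ + w₁ • x₁ + w₂ • x₂ + w₃ • x₃ = 0) :
    finrank ℝ (span ℝ ({x₀, x₁, x₂, x₃} : Set V)) ≤ 3 := by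
  by_cases h3 : w₃ ≠ 0
  · exact span4 _ _ _ _ _ _ _ _ h3 h
  by_cases h2 : w₂ ≠ 0
  · have hset : ({x₀, x₁, x₂, x₃} : Set V) = {x₀, x₁, x₃, x₂} := by ext y; simp; tauto
    rw [hset]
    exact span4 _ _ _ _ w₀ w₁ w₃ w₂ h2 (by linear_combination (norm := module) h)
  by_cases h1 : w₁ ≠ 0
  · have hset : ({x₀, x₁, x₂, x₃} : Set V) = {x₀, x₂, x₃, x₁} := by ext y; simp; tauto
    rw [hset]
    exact span4 _ _ _ _ w₀ w₂ w₃ w₁ h1 (by linear_combination (norm := module) h)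
  have h0 : w₀ ≠ 0 := by push_neg at h3 h2 h1; exact fun h0 => hw ⟨h0, h1, h2, h3⟩
  have hset : ({x₀, x₁, x₂, x₃} : Set V) = {x₁, x₂, x₃, x₀} := by ext y; simp; tauto
  rw [hset]
  exact span4 _ _ _ _ w₁ w₂ w₃ w₀ h0 (by linear_combination (norm := module) h)

lemma exists_rel_of_finrank_le (x₀ x₁ x₂ x₃ : V)
    (h : finrank ℝ (span ℝ ({x₀, x₁, x₂, x₃} : Set V)) ≤ 3) :
    ∃ w₀ w₁ w₂ w₃ : ℝ, (w₀ • x₀ + w₁ • x₁ + w₂ • x₂ + w₃ • x₃ = 0) ∧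
      ¬(w₀ = 0 ∧ w₁ = 0 ∧ w₂ = 0 ∧ w₃ = 0) := by
  by_contra hno
  push_neg at hno
  have hli : LinearIndependent ℝ ![x₀, x₁, x₂, x₃] := by
    rw [Fintype.linearIndependent_iff]
    intro g hg
    have hg' : g 0 • x₀ + g 1 • x₁ + g 2 • x₂ + g 3 • x₃ = 0 := by
      simpa [Fin.sum_univ_four] using hg
    have := hno (g 0) (g 1) (g 2) (g 3) hg'
    intro i; fin_cases i <;> tauto
  have hc : finrank ℝ (span ℝ (Set.range ![x₀, x₁, x₂, x₃])) = 4 := by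
    rw [finrank_span_eq_card hli]; simp
  rw [show Set.range ![x₀, x₁, x₂, x₃] = ({x₀, x₁, x₂, x₃} : Set V) by
    simp [Matrix.range_cons, Matrix.range_empty]; ext y; simp; tauto] at hc
  omega

end Aux

section Geo
variable {n : ℕ}
local notation "E" => EuclideanSpace ℝ (Fin n)

lemma lift_rel_iff (a b c d : EuclideanSpace ℝ (Fin n)) (w0 w1 w2 w3 : ℝ) :
    (w0 • lift a + w1 • lift b + w2 • lift c + w3 • lift d = 0) ↔
    (w0+w1+w2+w3 = 0 ∧ w0•a+w1•b+w2•c+w3•d = (0:EuclideanSpace ℝ (Fin n)) ∧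
      w0*‖a‖^2+w1*‖b‖^2+w2*‖c‖^2+w3*‖d‖^2 = 0) := by
  constructor
  · intro h
    have hn := congrFun h ⟨n, by omega⟩
    have hn1 := congrFun h ⟨n+1, by omega⟩
    simp only [Pi.add_apply, Pi.smul_apply, smul_eq_mul, Pi.zero_apply, lift] at hn hn1
    norm_num at hn hn1
    refine ⟨by linarith, ?_, by linarith⟩
    ext j
    have hj := congrFun h ⟨(j:ℕ), by omega⟩
    simp only [Pi.add_apply, Pi.smul_apply, smul_eq_mul, Pi.zero_apply, lift] at hj
    simp only [Fin.eta] at hj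
    simp only [dif_pos j.isLt] at hj
    simp only [PiLp.add_apply, PiLp.smul_apply, smul_eq_mul, PiLp.zero_apply]
    linarith
  · rintro ⟨h1, h2, h3⟩
    funext i
    simp only [Pi.add_apply, Pi.smul_apply, smul_eq_mul, Pi.zero_apply, lift]
    by_cases h : (i:ℕ) < n
    · simp only [dif_pos h]
      have hj := congrArg (fun v : EuclideanSpace ℝ (Fin n) => v ⟨(i:ℕ), h⟩) h2
      simp only [PiLp.add_apply, PiLp.smul_apply, smul_eq_mul, PiLp.zero_apply] at hj
      linarith
    · by_cases h' : (i:ℕ) = n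
      · simp only [dif_neg h, if_pos h']
        linarith
      · simp only [dif_neg h, if_neg h']
        linarith

lemma collinear_P (a b c d : E)
    (hab : a ≠ b) (hac : a ≠ c) (had : a ≠ d)
    (hbc : b ≠ c) (hbd : b ≠ d) (hcd : c ≠ d)
    (h : Collinear ℝ ({a, b, c, d} : Set E)) :
    ∃ w₀ w₁ w₂ w₃ : ℝ, ¬(w₀ = 0 ∧ w₁ = 0 ∧ w₂ = 0 ∧ w₃ = 0) ∧
      (w₀ + w₁ + w₂ + w₃ = 0) ∧ (w₀•a + w₁•b + w₂•c + w₃•d = (0:E)) ∧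
      (w₀*‖a‖^2 + w₁*‖b‖^2 + w₂*‖c‖^2 + w₃*‖d‖^2 = 0) := by
  rw [collinear_iff_exists_forall_eq_smul_vadd] at h
  obtain ⟨p, v, hpv⟩ := h
  obtain ⟨t₀, ha⟩ := hpv a (by simp)
  obtain ⟨t₁, hb⟩ := hpv b (by simp)
  obtain ⟨t₂, hc⟩ := hpv c (by simp)
  obtain ⟨t₃, hd⟩ := hpv d (by simp)
  have h01 : t₀ ≠ t₁ := fun he => hab (by rw [ha, hb, he])
  have h02 : t₀ ≠ t₂ := fun he => hac (by rw [ha, hc, he])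
  have h03 : t₀ ≠ t₃ := fun he => had (by rw [ha, hd, he])
  have h12 : t₁ ≠ t₂ := fun he => hbc (by rw [hb, hc, he])
  have h13 : t₁ ≠ t₃ := fun he => hbd (by rw [hb, hd, he])
  have h23 : t₂ ≠ t₃ := fun he => hcd (by rw [hc, hd, he])
  set w₀ := (t₂-t₁)*(t₃-t₁)*(t₃-t₂) with hw₀
  set w₁ := -((t₂-t₀)*(t₃-t₀)*(t₃-t₂)) with hw₁
  set w₂ := (t₁-t₀)*(t₃-t₀)*(t₃-t₁) with hw₂
  set w₃ := -((t₁-t₀)*(t₂-t₀)*(t₂-t₁)) with hw₃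
  have d01 : t₀ - t₁ ≠ 0 := sub_ne_zero.2 h01
  have d02 : t₀ - t₂ ≠ 0 := sub_ne_zero.2 h02
  have d03 : t₀ - t₃ ≠ 0 := sub_ne_zero.2 h03
  have d12 : t₁ - t₂ ≠ 0 := sub_ne_zero.2 h12
  have d13 : t₁ - t₃ ≠ 0 := sub_ne_zero.2 h13
  have d23 : t₂ - t₃ ≠ 0 := sub_ne_zero.2 h23
  have d10 : t₁ - t₀ ≠ 0 := sub_ne_zero.2 h01.symm
  have d20 : t₂ - t₀ ≠ 0 := sub_ne_zero.2 h02.symm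
  have d21 : t₂ - t₁ ≠ 0 := sub_ne_zero.2 h12.symm
  have d30 : t₃ - t₀ ≠ 0 := sub_ne_zero.2 h03.symm
  have d31 : t₃ - t₁ ≠ 0 := sub_ne_zero.2 h13.symm
  have d32 : t₃ - t₂ ≠ 0 := sub_ne_zero.2 h23.symm
  have hw0ne : w₀ ≠ 0 := mul_ne_zero (mul_ne_zero d21 d31) d32
  have e0 : w₀ + w₁ + w₂ + w₃ = 0 := by rw [hw₀, hw₁, hw₂, hw₃]; ring
  have e1 : w₀*t₀ + w₁*t₁ + w₂*t₂ + w₃*t₃ = 0 := by rw [hw₀, hw₁, hw₂, hw₃]; ring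
  have e2 : w₀*t₀^2 + w₁*t₁^2 + w₂*t₂^2 + w₃*t₃^2 = 0 := by rw [hw₀, hw₁, hw₂, hw₃]; ring
  refine ⟨w₀, w₁, w₂, w₃, fun hh => hw0ne hh.1, e0, ?_, ?_⟩
  · rw [ha, hb, hc, hd]
    simp only [vadd_eq_add]
    linear_combination (norm := module) e1 • v + e0 • p
  · have hna : ‖a‖^2 = t₀^2*‖v‖^2 + 2*t₀*⟪v, p⟫ + ‖p‖^2 := by
      rw [ha, vadd_eq_add, norm_add_sq_real, norm_smul, real_inner_smul_left]
      simp [mul_pow]; ring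
    have hnb : ‖b‖^2 = t₁^2*‖v‖^2 + 2*t₁*⟪v, p⟫ + ‖p‖^2 := by
      rw [hb, vadd_eq_add, norm_add_sq_real, norm_smul, real_inner_smul_left]
      simp [mul_pow]; ring
    have hnc : ‖c‖^2 = t₂^2*‖v‖^2 + 2*t₂*⟪v, p⟫ + ‖p‖^2 := by
      rw [hc, vadd_eq_add, norm_add_sq_real, norm_smul, real_inner_smul_left]
      simp [mul_pow]; ring
    have hnd : ‖d‖^2 = t₃^2*‖v‖^2 + 2*t₃*⟪v, p⟫ + ‖p‖^2 := by
      rw [hd, vadd_eq_add, norm_add_sq_real, norm_smul, real_inner_smul_left]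
      simp [mul_pow]; ring
    rw [hna, hnb, hnc, hnd]
    linear_combination ‖v‖^2 * e2 + (2*⟪v, p⟫) * e1 + ‖p‖^2 * e0

lemma concyclic_P (a b c d : E) (h : Concyclic ({a, b, c, d} : Set E)) :
    ∃ w₀ w₁ w₂ w₃ : ℝ, ¬(w₀ = 0 ∧ w₁ = 0 ∧ w₂ = 0 ∧ w₃ = 0) ∧
      (w₀ + w₁ + w₂ + w₃ = 0) ∧ (w₀•a + w₁•b + w₂•c + w₃•d = (0:E)) ∧
      (w₀*‖a‖^2 + w₁*‖b‖^2 + w₂*‖c‖^2 + w₃*‖d‖^2 = 0) := by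
  obtain ⟨⟨o, r, ho⟩, hcop⟩ := h
  have hrange : Set.range ![a, b, c, d] = ({a, b, c, d} : Set E) := by
    simp [Matrix.range_cons, Matrix.range_empty]; ext y; simp; tauto
  have hnind : ¬ AffineIndependent ℝ ![a, b, c, d] := by
    rw [← finrank_vectorSpan_le_iff_not_affineIndependent ℝ _ (by simp : Fintype.card (Fin 4) = 2 + 2)]
    rw [hrange]
    exact (coplanar_iff_finrank_le_two.mp hcop)
  rw [affineIndependent_iff_of_fintype] at hnind
  push_neg at hnind
  obtain ⟨w, hsum, hvsub, i, hwi⟩ := hnind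
  have hcombo : w 0 • a + w 1 • b + w 2 • c + w 3 • d = (0:E) := by
    have := Finset.univ.weightedVSub_eq_linear_combination (w := w) (p := ![a,b,c,d]) hsum
    rw [this] at hvsub
    simpa [Fin.sum_univ_four] using hvsub
  have hsum4 : w 0 + w 1 + w 2 + w 3 = 0 := by simpa [Fin.sum_univ_four] using hsum
  refine ⟨w 0, w 1, w 2, w 3, ?_, hsum4, hcombo, ?_⟩
  · intro hh
    apply hwi
    fin_cases i <;> tauto
  · -- norms via sphere
    have hsq : ∀ x ∈ ({a, b, c, d} : Set E), ‖x‖^2 = r^2 + 2*⟪x, o⟫ - ‖o‖^2 := by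
      intro x hx
      have := ho x hx
      have h2 : ‖x - o‖^2 = r^2 := by
        rw [← this, dist_eq_norm]
      rw [norm_sub_sq_real] at h2
      linarith
    have hinner : w 0 * ⟪a, o⟫ + w 1 * ⟪b, o⟫ + w 2 * ⟪c, o⟫ + w 3 * ⟪d, o⟫ = 0 := by
      have := congrArg (fun y : E => ⟪y, o⟫) hcombo
      simpa [inner_add_left, real_inner_smul_left, Finset.mul_sum, mul_assoc] using this
    rw [hsq a (by simp), hsq b (by simp), hsq c (by simp), hsq d (by simp)]
    linear_combination (r^2 - ‖o‖^2) * hsum4 + 2 * hinner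

lemma concyclic_of_rel (p₁ p₂ p₃ q : E) (hind : AffineIndependent ℝ ![p₁, p₂, p₃])
    (w₁ w₂ w₃ u : ℝ) (hu : u ≠ 0)
    (hsum : w₁ + w₂ + w₃ + u = 0)
    (hvec : w₁•p₁ + w₂•p₂ + w₃•p₃ + u•q = (0:E))
    (hnorm : w₁*‖p₁‖^2 + w₂*‖p₂‖^2 + w₃*‖p₃‖^2 + u*‖q‖^2 = 0) :
    Concyclic ({p₁, p₂, p₃, q} : Set E) := by
  have hrange : Set.range ![p₁, p₂, p₃] = ({p₁, p₂, p₃} : Set E) := by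
    simp [Matrix.range_cons, Matrix.range_empty]; ext y; simp; tauto
  -- q is an affine combination of p₁ p₂ p₃
  have hq : q ∈ affineSpan ℝ ({p₁, p₂, p₃} : Set E) := by
    have hw : ∑ i, ![-(w₁/u), -(w₂/u), -(w₃/u)] i = (1:ℝ) := by
      have hws : -(w₁ + w₂ + w₃) = u := by linarith
      have h9 : -(w₁/u) + -(w₂/u) + -(w₃/u) = (1:ℝ) := by
        rw [show -(w₁/u) + -(w₂/u) + -(w₃/u) = -(w₁+w₂+w₃)/u from by ring, hws, div_self hu]
      simpa [Fin.sum_univ_three] using h9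
    have hmem := affineCombination_mem_affineSpan (k := ℝ) hw ![p₁, p₂, p₃]
    rw [hrange] at hmem
    have heq : Finset.univ.affineCombination ℝ ![p₁, p₂, p₃] ![-(w₁/u), -(w₂/u), -(w₃/u)] = q := by
      rw [Finset.affineCombination_eq_linear_combination _ _ _ hw]
      simp [Fin.sum_univ_three]
      have : u • ((-(w₁/u))•p₁ + (-(w₂/u))•p₂ + (-(w₃/u))•p₃) = u • q := by
        rw [smul_add, smul_add, smul_smul, smul_smul, smul_smul]
        have e1 : u * -(w₁/u) = -w₁ := by field_simp <;> ring_nf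
        have e2 : u * -(w₂/u) = -w₂ := by field_simp <;> ring_nf
        have e3 : u * -(w₃/u) = -w₃ := by field_simp <;> ring_nf
        rw [e1, e2, e3]
        linear_combination (norm := module) (-1 : ℝ) • hvec
      have := smul_right_injective _ hu this
      convert this using 2 <;> module
    rwa [heq] at hmem
  constructor
  · -- Cospherical via circumsphere of p₁ p₂ p₃
    obtain ⟨cs, ⟨hcen, hsub⟩, -⟩ := hind.existsUnique_dist_eq
    set o := cs.center
    set r := cs.radius
    have h1 : dist p₁ o = r := hsub (by rw [hrange]; simp)
    have h2 : dist p₂ o = r := hsub (by rw [hrange]; simp)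
    have h3 : dist p₃ o = r := hsub (by rw [hrange]; simp)
    have hr : 0 ≤ r := h1 ▸ dist_nonneg
    have sq_of : ∀ x : E, dist x o = r → ‖x‖^2 - 2*⟪x, o⟫ + ‖o‖^2 = r^2 := by
      intro x hx
      have : ‖x - o‖^2 = r^2 := by rw [← dist_eq_norm, hx]
      rw [norm_sub_sq_real] at this
      linarith
    have e1 := sq_of p₁ h1
    have e2 := sq_of p₂ h2
    have e3 := sq_of p₃ h3
    have hinner : w₁ * ⟪p₁, o⟫ + w₂ * ⟪p₂, o⟫ + w₃ * ⟪p₃, o⟫ + u * ⟪q, o⟫ = 0 := by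
      have := congrArg (fun y : E => ⟪y, o⟫) hvec
      simpa [inner_add_left, real_inner_smul_left, Finset.mul_sum, mul_assoc] using this
    have hqsq : ‖q - o‖^2 = r^2 := by
      rw [norm_sub_sq_real]
      have key : u * (‖q‖^2 - 2*⟪q, o⟫ + ‖o‖^2 - r^2) = 0 := by
        linear_combination hnorm + (‖o‖^2 - r^2) * hsum - 2 * hinner - w₁ * e1 - w₂ * e2 - w₃ * e3
      have := mul_eq_zero.mp key
      rcases this with h | h
      · exact absurd h hu
      · linarith
    have hqdist : dist q o = r := by
      rw [dist_eq_norm]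
      nlinarith [norm_nonneg (q - o), hqsq]
    refine ⟨o, r, ?_⟩
    rintro x (rfl | rfl | rfl | rfl) <;> assumption
  · -- Coplanar
    have hset : ({p₁, p₂, p₃, q} : Set E) = insert q {p₁, p₂, p₃} := by ext y; simp; tauto
    rw [hset, coplanar_insert_iff_of_mem_affineSpan hq]
    exact coplanar_triple ℝ p₁ p₂ p₃

lemma P_to_lhs (a b c d : E) (hab : a ≠ b)
    (w₀ w₁ w₂ w₃ : ℝ) (hw : ¬(w₀ = 0 ∧ w₁ = 0 ∧ w₂ = 0 ∧ w₃ = 0))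
    (hsum : w₀ + w₁ + w₂ + w₃ = 0) (hvec : w₀•a + w₁•b + w₂•c + w₃•d = (0:E))
    (hnorm : w₀*‖a‖^2 + w₁*‖b‖^2 + w₂*‖c‖^2 + w₃*‖d‖^2 = 0) :
    Concyclic ({a, b, c, d} : Set E) ∨ Collinear ℝ ({a, b, c, d} : Set E) := by
  by_cases hcol : Collinear ℝ ({a, b, c, d} : Set E)
  · exact Or.inr hcol
  left
  have htri : ¬ Collinear ℝ ({a, b, c} : Set E) ∨ ¬ Collinear ℝ ({a, b, d} : Set E) := by
    by_contra hh
    push_neg at hh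
    obtain ⟨h1, h2⟩ := hh
    have hc' : c ∈ line[ℝ, a, b] :=
      h1.mem_affineSpan_of_mem_of_ne (by simp) (by simp) (by simp) hab
    have hd' : d ∈ line[ℝ, a, b] :=
      h2.mem_affineSpan_of_mem_of_ne (by simp) (by simp) (by simp) hab
    have := collinear_insert_insert_of_mem_affineSpan_pair hc' hd'
    apply hcol
    have hset : ({a, b, c, d} : Set E) = {c, d, a, b} := by ext y; simp; tauto
    rwa [hset]
  rcases htri with h3 | h3
  · have hind : AffineIndependent ℝ ![a, b, c] := by
      rw [affineIndependent_iff_not_collinear_set]; exact h3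
    have hu : w₃ ≠ 0 := by
      intro hu0
      rw [hu0] at hsum hvec
      have hz := affineIndependent_iff.mp hind Finset.univ ![w₀, w₁, w₂]
        (by simp [Fin.sum_univ_three]; linarith)
        (by simp [Fin.sum_univ_three]; linear_combination (norm := module) hvec)
      exact hw ⟨hz 0 (by simp), hz 1 (by simp), hz 2 (by simp), hu0⟩
    exact concyclic_of_rel a b c d hind w₀ w₁ w₂ w₃ hu hsum hvec hnorm
  · have hind : AffineIndependent ℝ ![a, b, d] := by
      rw [affineIndependent_iff_not_collinear_set]; exact h3
    have hu : w₂ ≠ 0 := by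
      intro hu0
      rw [hu0] at hsum hvec
      have hz := affineIndependent_iff.mp hind Finset.univ ![w₀, w₁, w₃]
        (by simp [Fin.sum_univ_three]; linarith)
        (by simp [Fin.sum_univ_three]; linear_combination (norm := module) hvec)
      exact hw ⟨hz 0 (by simp), hz 1 (by simp), hu0, hz 2 (by simp)⟩
    have hcy := concyclic_of_rel a b d c hind w₀ w₁ w₃ w₂ hu (by linarith)
      (by linear_combination (norm := module) hvec) (by linarith)
    have hset : ({a, b, c, d} : Set E) = {a, b, d, c} := by ext y; simp; tauto
    rwa [hset]

end Geo

/-- Four pairwise distinct points of ℝⁿ lie on a common circle or line iff their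
light cone lifts span a subspace of dimension at most 3. -/
theorem stmt_12 (n : ℕ) (a b c d : EuclideanSpace ℝ (Fin n))
    (hab : a ≠ b) (hac : a ≠ c) (had : a ≠ d)
    (hbc : b ≠ c) (hbd : b ≠ d) (hcd : c ≠ d) :
    (Concyclic ({a, b, c, d} : Set (EuclideanSpace ℝ (Fin n))) ∨
      Collinear ℝ ({a, b, c, d} : Set (EuclideanSpace ℝ (Fin n)))) ↔
    Module.finrank ℝ
      (Submodule.span ℝ ({lift a, lift b, lift c, lift d} : Set (Fin (n + 2) → ℝ)))
      ≤ 3 := by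
  constructor
  · rintro (h | h)
    · obtain ⟨w₀, w₁, w₂, w₃, hw, hsum, hvec, hnorm⟩ := concyclic_P a b c d h
      exact span_four_le_three _ _ _ _ w₀ w₁ w₂ w₃ hw
        ((lift_rel_iff a b c d w₀ w₁ w₂ w₃).mpr ⟨hsum, hvec, hnorm⟩)
    · obtain ⟨w₀, w₁, w₂, w₃, hw, hsum, hvec, hnorm⟩ :=
        collinear_P a b c d hab hac had hbc hbd hcd h
      exact span_four_le_three _ _ _ _ w₀ w₁ w₂ w₃ hw
        ((lift_rel_iff a b c d w₀ w₁ w₂ w₃).mpr ⟨hsum, hvec, hnorm⟩)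
  · intro h
    obtain ⟨w₀, w₁, w₂, w₃, hcombo, hw⟩ := exists_rel_of_finrank_le _ _ _ _ h
    obtain ⟨hsum, hvec, hnorm⟩ := (lift_rel_iff a b c d w₀ w₁ w₂ w₃).mp hcombo
    exact P_to_lhs a b c d hab w₀ w₁ w₂ w₃ hw hsum hvec hnorm
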